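/- Let P_XY be a probability distribution on 𝒳×𝒴 with P_XY(x,y) > 0 for all (x,y), with 𝒳-marginal P_X, and let E0 > 0. Define R_w*(E0) = min over all probability distributions Q_X on 𝒳 with D(Q_X‖P_X) ≤ E0 of [ Σ_x Q_X(x) ln(1/P_X(x)) ] − E0. Then the minimum over all joint probability distributions Q_XY on 𝒳×𝒴 of { D(Q_XY‖P_XY) + [ R_w*(E0) − H_Q(X|Y) ]_+ } equals the supremum over ρ ∈ [0,1] and λ > 0 of { −ln( Σ_y ( Σ_x P_XY(x,y)^{1/(1+ρ)} )^{1+ρ} ) − ρλ ln( Σ_x P_X(x)^{1+1/λ} ) − ρ(1+λ) E0 }. -/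

import Mathlib

open Finset

/-- A probability distribution on a finite set: nonnegative and summing to 1. -/
def IsProb {α : Type*} [Fintype α] (Q : α → ℝ) : Prop :=
  (∀ a, 0 ≤ Q a) ∧ ∑ a, Q a = 1

/-- Kullback–Leibler divergence `D(Q‖P) = Σ_a Q(a) ln(Q(a)/P(a))`
(with the convention `0 · ln(0/p) = 0`, automatic since `Real.log 0 = 0`
and the term is multiplied by `Q a = 0`). -/
noncomputable def KL {α : Type*} [Fintype α] (Q P : α → ℝ) : ℝ :=
  ∑ a, Q a * Real.log (Q a / P a)

/-- Shannon entropy `H_Q(X) = -Σ_x Q(x) ln Q(x)` (with `0 ln 0 = 0`). -/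
noncomputable def entropy {α : Type*} [Fintype α] (Q : α → ℝ) : ℝ :=
  -∑ a, Q a * Real.log (Q a)

/-- The 𝒳-marginal of a joint distribution on `𝒳 × 𝒴`. -/
noncomputable def margX {𝒳 𝒴 : Type*} [Fintype 𝒴] (Q : 𝒳 × 𝒴 → ℝ) : 𝒳 → ℝ :=
  fun x => ∑ y, Q (x, y)

/-- The 𝒴-marginal of a joint distribution on `𝒳 × 𝒴`. -/
noncomputable def margY {𝒳 𝒴 : Type*} [Fintype 𝒳] (Q : 𝒳 × 𝒴 → ℝ) : 𝒴 → ℝ :=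
  fun y => ∑ x, Q (x, y)

/-- Conditional entropy `H_Q(X|Y) = -Σ_{x,y} Q(x,y) ln(Q(x,y)/Q_Y(y))` (with `0 ln 0 = 0`). -/
noncomputable def condEnt {𝒳 𝒴 : Type*} [Fintype 𝒳] [Fintype 𝒴] (Q : 𝒳 × 𝒴 → ℝ) : ℝ :=
  -∑ x, ∑ y, Q (x, y) * Real.log (Q (x, y) / margY Q y)

/-!
Weak duality. The log-sum inequality, applied inside each column `y` and then across the
columns, gives `-log Z(ρ) ≤ D(Q‖P) - ρ H_Q(X|Y)` for `ρ > -1`, where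
`Z(ρ) = Σ_y (Σ_x P(x,y)^{1/(1+ρ)})^{1+ρ}` is Gallager's sum; Gibbs' inequality likewise gives
`-λ log Σ_x P_X(x)^{1+1/λ} - (1+λ) E0 ≤ R_w*(E0)` for `λ > 0`. For `0 ≤ ρ ≤ 1` the two bounds
combine, since `ρ (R - H) ≤ [R - H]_+`.

Strong duality. The first bound is an equality for the tilted distribution
`Q_ρ(x,y) ∝ P(x,y)^{1/(1+ρ)} (Σ_x' P(x',y)^{1/(1+ρ)})^ρ`, and `ρ ↦ H_{Q_ρ}(X|Y)` is continuous
with `Q_0 = P`. Hence `P`, `Q_1`, or (intermediate value theorem) some `Q_ρ` with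
`H_{Q_ρ}(X|Y) = R_w*(E0)` is a saddle point. For the rate, the escort distribution
`Q ∝ P_X^{1+1/λ}` has duality gap `λ (E0 - D(Q‖P_X))`: it vanishes where the constraint is tight,
and is at most `λ E0` whenever `Q` is feasible.
-/

open Real

lemma mul_log_div_of_imp {a b : ℝ} (h : b = 0 → a = 0) :
    a * log (a / b) = a * log a - a * log b := by
  rcases eq_or_ne a 0 with rfl | ha
  · simp
  · rw [log_div ha (mt h ha), mul_sub]

theorem sum_mul_log_div_sum_le {ι : Type*} (s : Finset ι) {a b : ι → ℝ}
    (ha : ∀ i ∈ s, 0 ≤ a i) (hb : ∀ i ∈ s, 0 < b i) :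
    (∑ i ∈ s, a i) * log ((∑ i ∈ s, a i) / ∑ i ∈ s, b i) ≤ ∑ i ∈ s, a i * log (a i / b i) := by
  rcases s.eq_empty_or_nonempty with rfl | hs
  · simp
  set B := ∑ i ∈ s, b i
  have hB : 0 < B := sum_pos hb hs
  -- Jensen for `x ↦ x log x` at the points `a i / b i` with weights `b i / B`
  have jensen := convexOn_mul_log.map_sum_le (t := s) (w := fun i => b i / B)
    (p := fun i => a i / b i) (fun i hi => (div_pos (hb i hi) hB).le)
    (by rw [← sum_div, div_self hB.ne'])
    (fun i hi => Set.mem_Ici.2 (div_nonneg (ha i hi) (hb i hi).le))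
  have hw : ∀ i ∈ s, b i / B * (a i / b i) = a i / B := fun i hi => by
    field_simp [(hb i hi).ne']
  simp only [smul_eq_mul, sum_congr rfl hw, ← sum_div] at jensen
  have hw' : ∀ i ∈ s, b i / B * (a i / b i * log (a i / b i)) = a i * log (a i / b i) / B :=
    fun i hi => by rw [← mul_assoc, hw i hi, div_mul_eq_mul_div]
  rw [sum_congr rfl hw', ← sum_div, div_mul_eq_mul_div, div_le_div_iff_of_pos_right hB] at jensen
  exact jensen

section Gibbs

variable {α : Type*} [Fintype α]

theorem neg_log_sum_le_sum_mul_log_div {Q M : α → ℝ} (hQ : IsProb Q) (hM : ∀ a, 0 < M a) :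
    -log (∑ a, M a) ≤ ∑ a, Q a * log (Q a / M a) := by
  have h := sum_mul_log_div_sum_le univ (fun a _ => hQ.1 a) (fun a _ => hM a)
  rwa [hQ.2, one_mul, one_div, log_inv] at h

theorem KL_nonneg {Q W : α → ℝ} (hQ : IsProb Q) (hW : IsProb W) (hWpos : ∀ a, 0 < W a) :
    0 ≤ KL Q W := by
  have h := neg_log_sum_le_sum_mul_log_div hQ hWpos
  rwa [hW.2, log_one, neg_zero] at h

theorem KL_self {W : α → ℝ} : KL W W = 0 := by
  simp [KL]

end Gibbs

section Rate

variable {α : Type*} [Fintype α] {W : α → ℝ}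

noncomputable def escort (W : α → ℝ) (t : ℝ) (a : α) : ℝ :=
  W a ^ t / ∑ b, W b ^ t

noncomputable def rateSet (W : α → ℝ) (E0 : ℝ) : Set ℝ :=
  {u | ∃ QX : α → ℝ, IsProb QX ∧ KL QX W ≤ E0 ∧ u = (∑ x, QX x * log (1 / W x)) - E0}

noncomputable def rateDual (W : α → ℝ) (E0 l : ℝ) : ℝ :=
  -l * log (∑ x, W x ^ (1 + 1 / l)) - (1 + l) * E0

theorem rateDual_le_of_KL_le (hW : ∀ a, 0 < W a) {E0 l : ℝ} (hl : 0 < l) {Q : α → ℝ}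
    (hQ : IsProb Q) (hKL : KL Q W ≤ E0) :
    rateDual W E0 l ≤ (∑ x, Q x * log (1 / W x)) - E0 := by
  have hgibbs := neg_log_sum_le_sum_mul_log_div hQ fun x => rpow_pos_of_pos (hW x) (1 + 1 / l)
  have hsplit : ∑ x, Q x * log (1 / W x) + l * KL Q W =
      l * ∑ x, Q x * log (Q x / W x ^ (1 + 1 / l)) := by
    rw [KL, mul_sum, mul_sum, ← sum_add_distrib]
    refine sum_congr rfl fun x _ => ?_
    rw [mul_log_div_of_imp fun h => absurd h (hW x).ne',
      mul_log_div_of_imp fun h => absurd h (rpow_pos_of_pos (hW x) _).ne',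
      one_div, log_inv, log_rpow (hW x)]
    field_simp
    ring
  unfold rateDual
  nlinarith [mul_le_mul_of_nonneg_left hKL hl.le, mul_le_mul_of_nonneg_left hgibbs hl.le]

variable [Nonempty α]

theorem sum_rpow_pos (hW : ∀ a, 0 < W a) (t : ℝ) : 0 < ∑ a, W a ^ t :=
  sum_pos (fun a _ => rpow_pos_of_pos (hW a) t) univ_nonempty

theorem escort_pos (hW : ∀ a, 0 < W a) (t : ℝ) (a : α) : 0 < escort W t a :=
  div_pos (rpow_pos_of_pos (hW a) t) (sum_rpow_pos hW t)

theorem isProb_escort (hW : ∀ a, 0 < W a) (t : ℝ) : IsProb (escort W t) := by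
  refine ⟨fun a => (escort_pos hW t a).le, ?_⟩
  simp only [escort]
  rw [← sum_div, div_self (sum_rpow_pos hW t).ne']

omit [Nonempty α] in
theorem escort_one (hW : IsProb W) : escort W 1 = W := by
  funext a
  simp [escort, hW.2]

theorem continuous_KL_escort (hW : ∀ a, 0 < W a) : Continuous fun t => KL (escort W t) W := by
  have hpow : ∀ a, Continuous fun t : ℝ => W a ^ t := fun a => continuous_const_rpow (hW a).ne'
  have hesc : ∀ a, Continuous fun t => escort W t a := fun a =>
    (hpow a).div (continuous_finsetSum _ fun b _ => hpow b)
      fun t => (sum_rpow_pos hW t).ne'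
  exact continuous_finsetSum _ fun a _ => (hesc a).mul
    (((hesc a).div_const _).log fun t => (div_pos (escort_pos hW t a) (hW a)).ne')

theorem escort_rate_eq_rateDual_add (hW : ∀ a, 0 < W a) (E0 : ℝ) {l : ℝ} (hl : l ≠ 0) :
    (∑ x, escort W (1 + 1 / l) x * log (1 / W x)) - E0 =
      rateDual W E0 l + l * (E0 - KL (escort W (1 + 1 / l)) W) := by
  rw [rateDual]
  set e := escort W (1 + 1 / l)
  set Z := ∑ x, W x ^ (1 + 1 / l)
  set T := ∑ x, e x * log (W x)
  have hlog : ∀ x, log (e x / W x) = 1 / l * log (W x) - log Z := fun x => by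
    rw [log_div (escort_pos hW _ x).ne' (hW x).ne', escort,
      log_div (rpow_pos_of_pos (hW x) _).ne' (sum_rpow_pos hW _).ne', log_rpow (hW x)]
    ring
  have hKL : KL e W = 1 / l * T - log Z := by
    have he : ∑ x, e x = 1 := (isProb_escort hW _).2
    rw [KL, sum_congr rfl fun x _ => by rw [hlog x, mul_sub, mul_left_comm], sum_sub_distrib,
      ← mul_sum, ← sum_mul, he, one_mul]
  have hobj : ∑ x, e x * log (1 / W x) = -T := by
    simp only [one_div, log_inv, mul_neg, sum_neg_distrib, T]
  rw [hKL, hobj]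
  field_simp
  ring

theorem exists_escort_rate_le_rateDual_add (hW : IsProb W) (hWpos : ∀ a, 0 < W a) {E0 ε : ℝ}
    (hE0 : 0 < E0) (hε : 0 < ε) :
    ∃ l, 0 < l ∧ KL (escort W (1 + 1 / l)) W ≤ E0 ∧
      (∑ x, escort W (1 + 1 / l) x * log (1 / W x)) - E0 ≤ rateDual W E0 l + ε := by
  have hl₀ : 0 < ε / E0 := div_pos hε hE0
  by_cases hfeas : KL (escort W (1 + 1 / (ε / E0))) W ≤ E0
  · -- the duality gap `l (E0 - KL)` is at most `l E0 = ε`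
    refine ⟨ε / E0, hl₀, hfeas, ?_⟩
    have hKL := KL_nonneg (isProb_escort hWpos (1 + 1 / (ε / E0))) hW hWpos
    rw [escort_rate_eq_rateDual_add hWpos E0 hl₀.ne']
    have : ε / E0 * E0 = ε := div_mul_cancel₀ ε hE0.ne'
    nlinarith
  · -- otherwise some escort distribution exhausts the constraint, and the gap vanishes
    push Not at hfeas
    have hKL_one : KL (escort W 1) W = 0 := by rw [escort_one hW, KL_self]
    obtain ⟨t, ⟨ht1, -⟩, hKLt : KL (escort W t) W = E0⟩ :=
      intermediate_value_Icc (by simp [(div_pos hE0 hε).le])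
        (continuous_KL_escort hWpos).continuousOn ⟨hKL_one ▸ hE0.le, hfeas.le⟩
    have ht : 1 < t := ht1.lt_of_ne (by rintro rfl; linarith)
    have hlt : 1 + 1 / (1 / (t - 1)) = t := by rw [one_div_one_div]; ring
    refine ⟨1 / (t - 1), by simpa using ht, by rw [hlt, hKLt], ?_⟩
    rw [escort_rate_eq_rateDual_add hWpos E0 (by simp [sub_ne_zero.2 ht.ne']), hlt, hKLt]
    linarith

theorem isLUB_rateDual (hW : IsProb W) (hWpos : ∀ a, 0 < W a) {E0 : ℝ} (hE0 : 0 < E0) :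
    IsLUB (rateDual W E0 '' Set.Ioi 0) (sInf (rateSet W E0)) := by
  have hne : (rateSet W E0).Nonempty := ⟨_, W, hW, by rw [KL_self]; exact hE0.le, rfl⟩
  have hlow : ∀ l ∈ Set.Ioi (0 : ℝ), ∀ u ∈ rateSet W E0, rateDual W E0 l ≤ u := by
    rintro l hl u ⟨Q, hQ, hKL, rfl⟩
    exact rateDual_le_of_KL_le hWpos hl hQ hKL
  refine ⟨?_, fun b hb => le_of_forall_pos_le_add fun ε hε => ?_⟩
  · rintro _ ⟨l, hl, rfl⟩
    exact le_csInf hne (hlow l hl)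
  · obtain ⟨l, hl, hfeas, hnear⟩ := exists_escort_rate_le_rateDual_add hW hWpos hE0 hε
    calc sInf (rateSet W E0)
        ≤ (∑ x, escort W (1 + 1 / l) x * log (1 / W x)) - E0 :=
          csInf_le ⟨_, hlow 1 (Set.mem_Ioi.2 one_pos)⟩ ⟨_, isProb_escort hWpos _, hfeas, rfl⟩
      _ ≤ rateDual W E0 l + ε := hnear
      _ ≤ b + ε := by grw [hb ⟨l, hl, rfl⟩]

end Rate

section Marginals

variable {𝒳 𝒴 : Type*} [Fintype 𝒳] [Fintype 𝒴] {Q : 𝒳 × 𝒴 → ℝ}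

theorem isProb_margX (hQ : IsProb Q) : IsProb (margX Q) :=
  ⟨fun x => sum_nonneg fun y _ => hQ.1 (x, y), by rw [← hQ.2, Fintype.sum_prod_type]; rfl⟩

theorem isProb_margY (hQ : IsProb Q) : IsProb (margY Q) :=
  ⟨fun y => sum_nonneg fun x _ => hQ.1 (x, y), by rw [← hQ.2, Fintype.sum_prod_type_right]; rfl⟩

theorem eq_zero_of_margY_eq_zero (hQ : IsProb Q) {x : 𝒳} {y : 𝒴} (h : margY Q y = 0) :
    Q (x, y) = 0 :=
  (sum_eq_zero_iff_of_nonneg fun x _ => hQ.1 (x, y)).1 h x (mem_univ x)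

omit [Fintype 𝒳] in
theorem margX_pos [Nonempty 𝒴] (hQ : ∀ p, 0 < Q p) (x : 𝒳) : 0 < margX Q x :=
  sum_pos (fun y _ => hQ (x, y)) univ_nonempty

theorem condEnt_eq_sum (Q : 𝒳 × 𝒴 → ℝ) :
    condEnt Q = -∑ p, Q p * log (Q p / margY Q p.2) := by
  rw [condEnt, Fintype.sum_prod_type]

end Marginals

section Gallager

variable {𝒳 𝒴 : Type*} [Fintype 𝒳] [Fintype 𝒴] {P Q : 𝒳 × 𝒴 → ℝ}

noncomputable def colSum (P : 𝒳 × 𝒴 → ℝ) (ρ : ℝ) (y : 𝒴) : ℝ :=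
  ∑ x, P (x, y) ^ (1 / (1 + ρ))

noncomputable def gallagerZ (P : 𝒳 × 𝒴 → ℝ) (ρ : ℝ) : ℝ :=
  ∑ y, colSum P ρ y ^ (1 + ρ)

noncomputable def tilted (P : 𝒳 × 𝒴 → ℝ) (ρ : ℝ) (p : 𝒳 × 𝒴) : ℝ :=
  P p ^ (1 / (1 + ρ)) * colSum P ρ p.2 ^ ρ / gallagerZ P ρ

theorem gallagerZ_zero (hP : IsProb P) : gallagerZ P 0 = 1 := by
  simp only [gallagerZ, colSum, add_zero, div_one, rpow_one]
  rw [← hP.2, Fintype.sum_prod_type_right]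

theorem tilted_zero (hP : IsProb P) : tilted P 0 = P := by
  funext p
  simp [tilted, gallagerZ_zero hP]

variable [Nonempty 𝒳]

omit [Fintype 𝒴] in
theorem colSum_pos (hP : ∀ p, 0 < P p) (ρ : ℝ) (y : 𝒴) : 0 < colSum P ρ y :=
  sum_pos (fun x _ => rpow_pos_of_pos (hP (x, y)) _) univ_nonempty

theorem margY_tilted (hP : ∀ p, 0 < P p) (ρ : ℝ) (y : 𝒴) :
    margY (tilted P ρ) y = colSum P ρ y ^ (1 + ρ) / gallagerZ P ρ := by
  simp only [margY, tilted]
  rw [← sum_div, ← sum_mul, rpow_add (colSum_pos hP ρ y), rpow_one]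
  rfl

theorem neg_log_gallagerZ_le (hP : ∀ p, 0 < P p) {ρ : ℝ} (hρ : 0 < 1 + ρ) (hQ : IsProb Q) :
    -log (gallagerZ P ρ) ≤ KL Q P - ρ * condEnt Q := by
  set θ := 1 / (1 + ρ)
  have hθ : (1 + ρ) * θ = 1 := mul_one_div_cancel hρ.ne'
  have hpoint : ∀ p, Q p * log (Q p / P p) + ρ * (Q p * log (Q p / margY Q p.2)) =
      (1 + ρ) * (Q p * log (Q p / P p ^ θ)) - ρ * (Q p * log (margY Q p.2)) := fun p => by
    rw [mul_log_div_of_imp fun h => absurd h (hP p).ne',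
      mul_log_div_of_imp (eq_zero_of_margY_eq_zero hQ),
      mul_log_div_of_imp fun h => absurd h (rpow_pos_of_pos (hP p) θ).ne', log_rpow (hP p)]
    linear_combination Q p * log (P p) * hθ
  have hcol : ∀ y, margY Q y * log (margY Q y / colSum P ρ y ^ (1 + ρ)) ≤
      ∑ x, ((1 + ρ) * (Q (x, y) * log (Q (x, y) / P (x, y) ^ θ)) -
        ρ * (Q (x, y) * log (margY Q y))) := fun y => by
    have hS := colSum_pos hP ρ y
    have hls := sum_mul_log_div_sum_le univ (fun x _ => hQ.1 (x, y))
      fun x _ => rpow_pos_of_pos (hP (x, y)) θ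
    change margY Q y * log (margY Q y / colSum P ρ y) ≤ _ at hls
    rw [mul_log_div_of_imp fun h => absurd h hS.ne'] at hls
    rw [sum_sub_distrib, ← mul_sum, ← mul_sum, ← sum_mul,
      mul_log_div_of_imp fun h => absurd h (rpow_pos_of_pos hS _).ne', log_rpow hS]
    change _ ≤ _ - ρ * (margY Q y * _)
    nlinarith [mul_le_mul_of_nonneg_left hls hρ.le]
  calc -log (gallagerZ P ρ)
      ≤ ∑ y, margY Q y * log (margY Q y / colSum P ρ y ^ (1 + ρ)) :=
        neg_log_sum_le_sum_mul_log_div (isProb_margY hQ)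
          fun y => rpow_pos_of_pos (colSum_pos hP ρ y) _
    _ ≤ ∑ y, ∑ x, ((1 + ρ) * (Q (x, y) * log (Q (x, y) / P (x, y) ^ θ)) -
          ρ * (Q (x, y) * log (margY Q y))) := sum_le_sum fun y _ => hcol y
    _ = ∑ p, (Q p * log (Q p / P p) + ρ * (Q p * log (Q p / margY Q p.2))) := by
        rw [Fintype.sum_prod_type_right]
        simp only [hpoint]
    _ = KL Q P - ρ * condEnt Q := by
        rw [sum_add_distrib, ← mul_sum, KL, condEnt_eq_sum]
        ring

theorem neg_log_gallagerZ_add_mul_le (hP : ∀ p, 0 < P p) {r : ℝ} (hr0 : 0 ≤ r) (hr1 : r ≤ 1)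
    (hQ : IsProb Q) (R : ℝ) :
    -log (gallagerZ P r) + r * R ≤ KL Q P + max (R - condEnt Q) 0 := by
  have hmax : r * (R - condEnt Q) ≤ max (R - condEnt Q) 0 :=
    calc r * (R - condEnt Q) ≤ r * max (R - condEnt Q) 0 :=
          mul_le_mul_of_nonneg_left (le_max_left _ _) hr0
      _ ≤ 1 * max (R - condEnt Q) 0 := mul_le_mul_of_nonneg_right hr1 (le_max_right _ _)
      _ = max (R - condEnt Q) 0 := one_mul _
  linarith [neg_log_gallagerZ_le hP (ρ := r) (by linarith) hQ]

variable [Nonempty 𝒴]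

theorem gallagerZ_pos (hP : ∀ p, 0 < P p) (ρ : ℝ) : 0 < gallagerZ P ρ :=
  sum_pos (fun y _ => rpow_pos_of_pos (colSum_pos hP ρ y) _) univ_nonempty

theorem tilted_pos (hP : ∀ p, 0 < P p) (ρ : ℝ) (p : 𝒳 × 𝒴) : 0 < tilted P ρ p :=
  div_pos (mul_pos (rpow_pos_of_pos (hP p) _) (rpow_pos_of_pos (colSum_pos hP ρ p.2) _))
    (gallagerZ_pos hP ρ)

theorem isProb_tilted (hP : ∀ p, 0 < P p) (ρ : ℝ) : IsProb (tilted P ρ) := by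
  refine ⟨fun p => (tilted_pos hP ρ p).le, ?_⟩
  rw [Fintype.sum_prod_type_right]
  change ∑ y, margY (tilted P ρ) y = 1
  simp only [margY_tilted hP]
  rw [← sum_div]
  exact div_self (gallagerZ_pos hP ρ).ne'

theorem log_tilted_div_margY (hP : ∀ p, 0 < P p) (ρ : ℝ) (p : 𝒳 × 𝒴) :
    log (tilted P ρ p / margY (tilted P ρ) p.2) =
      1 / (1 + ρ) * log (P p) - log (colSum P ρ p.2) := by
  have hS := colSum_pos hP ρ p.2
  have hZ := gallagerZ_pos hP ρ
  rw [margY_tilted hP, tilted, div_div_div_cancel_right₀ hZ.ne', mul_div_assoc,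
    ← rpow_sub hS, log_mul (rpow_pos_of_pos (hP p) _).ne' (rpow_pos_of_pos hS _).ne',
    log_rpow (hP p), log_rpow hS]
  ring

theorem KL_tilted (hP : ∀ p, 0 < P p) {ρ : ℝ} (hρ : 1 + ρ ≠ 0) :
    KL (tilted P ρ) P = ρ * condEnt (tilted P ρ) - log (gallagerZ P ρ) := by
  have hlog : ∀ p, log (tilted P ρ p / P p) =
      -ρ * log (tilted P ρ p / margY (tilted P ρ) p.2) - log (gallagerZ P ρ) := fun p => by
    rw [log_tilted_div_margY hP, log_div (tilted_pos hP ρ p).ne' (hP p).ne', tilted,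
      log_div (mul_pos (rpow_pos_of_pos (hP p) _) (rpow_pos_of_pos (colSum_pos hP ρ p.2) _)).ne'
        (gallagerZ_pos hP ρ).ne',
      log_mul (rpow_pos_of_pos (hP p) _).ne' (rpow_pos_of_pos (colSum_pos hP ρ p.2) _).ne',
      log_rpow (hP p), log_rpow (colSum_pos hP ρ p.2)]
    field_simp
    ring
  rw [KL, condEnt_eq_sum]
  simp only [hlog, mul_sub, sum_sub_distrib, ← sum_mul, (isProb_tilted hP ρ).2]
  simp only [mul_left_comm _ (-ρ), ← mul_sum]
  ring

theorem continuousOn_condEnt_tilted (hP : ∀ p, 0 < P p) :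
    ContinuousOn (fun ρ => condEnt (tilted P ρ)) (Set.Ioi (-1)) := by
  have hθ : ContinuousOn (fun ρ : ℝ => 1 / (1 + ρ)) (Set.Ioi (-1)) :=
    continuousOn_const.div (by fun_prop) fun ρ hρ => by linarith [Set.mem_Ioi.1 hρ]
  have hS : ∀ y, ContinuousOn (fun ρ => colSum P ρ y) (Set.Ioi (-1)) := fun y =>
    continuousOn_finsetSum _ fun x _ =>
      continuousOn_const.rpow hθ fun _ _ => Or.inl (hP (x, y)).ne'
  have hSpow : ∀ y {f : ℝ → ℝ}, Continuous f →
      ContinuousOn (fun ρ => colSum P ρ y ^ f ρ) (Set.Ioi (-1)) := fun y f hf =>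
    (hS y).rpow hf.continuousOn fun ρ _ => Or.inl (colSum_pos hP ρ y).ne'
  have htilted : ∀ p, ContinuousOn (fun ρ => tilted P ρ p) (Set.Ioi (-1)) := fun p =>
    ((continuousOn_const.rpow hθ fun _ _ => Or.inl (hP p).ne').mul
      (hSpow p.2 continuous_id)).div
      (continuousOn_finsetSum _ fun y _ => hSpow y (by fun_prop))
      fun ρ _ => (gallagerZ_pos hP ρ).ne'
  have hmargY : ∀ y, ContinuousOn (fun ρ => margY (tilted P ρ) y) (Set.Ioi (-1)) := fun y =>
    continuousOn_finsetSum _ fun x _ => htilted (x, y)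
  have hmargY_pos : ∀ ρ y, 0 < margY (tilted P ρ) y := fun ρ y =>
    sum_pos (fun x _ => tilted_pos hP ρ (x, y)) univ_nonempty
  refine (continuousOn_finsetSum _ fun x _ => continuousOn_finsetSum _ fun y _ => ?_).neg
  exact (htilted (x, y)).mul (((htilted (x, y)).div (hmargY y)
    fun ρ _ => (hmargY_pos ρ y).ne').log
    fun ρ _ => (div_pos (tilted_pos hP ρ (x, y)) (hmargY_pos ρ y)).ne')

theorem exists_KL_add_max_eq (hP : IsProb P) (hPpos : ∀ p, 0 < P p) (R : ℝ) :
    ∃ ρ ∈ Set.Icc (0 : ℝ) 1, ∃ Q, IsProb Q ∧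
      KL Q P + max (R - condEnt Q) 0 = -log (gallagerZ P ρ) + ρ * R := by
  rcases le_or_gt R (condEnt P) with hRP | hPR
  · refine ⟨0, ⟨le_rfl, zero_le_one⟩, P, hP, ?_⟩
    rw [KL_self, gallagerZ_zero hP, max_eq_right (sub_nonpos.2 hRP)]
    simp
  rcases le_or_gt (condEnt (tilted P 1)) R with hR1 | h1R
  · refine ⟨1, ⟨zero_le_one, le_rfl⟩, tilted P 1, isProb_tilted hPpos 1, ?_⟩
    rw [KL_tilted hPpos (by norm_num), max_eq_left (sub_nonneg.2 hR1)]
    ring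
  · obtain ⟨ρ, hρ, hHρ : condEnt (tilted P ρ) = R⟩ := intermediate_value_Icc zero_le_one
      ((continuousOn_condEnt_tilted hPpos).mono fun ρ hρ => by
        simp only [Set.mem_Ioi]; linarith [hρ.1])
      ⟨by simpa [tilted_zero hP] using hPR.le, h1R.le⟩
    refine ⟨ρ, hρ, tilted P ρ, isProb_tilted hPpos ρ, ?_⟩
    rw [KL_tilted hPpos (by linarith [hρ.1]), hHρ, sub_self, max_self]
    ring

theorem sInf_KL_add_max_eq_sSup (hP : IsProb P) (hPpos : ∀ p, 0 < P p) {g : ℝ → ℝ} {R : ℝ}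
    (hR : IsLUB (g '' Set.Ioi 0) R) :
    sInf {v | ∃ Q, IsProb Q ∧ v = KL Q P + max (R - condEnt Q) 0} =
      sSup {v | ∃ r l : ℝ, 0 ≤ r ∧ r ≤ 1 ∧ 0 < l ∧ v = -log (gallagerZ P r) + r * g l} := by
  obtain ⟨ρ, ⟨hρ0, hρ1⟩, Q₀, hQ₀, hsaddle⟩ := exists_KL_add_max_eq hP hPpos R
  have hmin : IsLeast {v | ∃ Q, IsProb Q ∧ v = KL Q P + max (R - condEnt Q) 0}
      (-log (gallagerZ P ρ) + ρ * R) := by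
    refine ⟨⟨Q₀, hQ₀, hsaddle.symm⟩, ?_⟩
    rintro _ ⟨Q, hQ, rfl⟩
    exact neg_log_gallagerZ_add_mul_le hPpos hρ0 hρ1 hQ R
  have hsup : IsLUB {v | ∃ r l : ℝ, 0 ≤ r ∧ r ≤ 1 ∧ 0 < l ∧ v = -log (gallagerZ P r) + r * g l}
      (-log (gallagerZ P ρ) + ρ * R) := by
    refine ⟨?_, fun b hb => le_of_forall_pos_le_add fun ε hε => ?_⟩
    · rintro _ ⟨r, l, hr0, hr1, hl, rfl⟩
      calc -log (gallagerZ P r) + r * g l ≤ -log (gallagerZ P r) + r * R := by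
            gcongr; exact hR.1 ⟨l, hl, rfl⟩
        _ ≤ KL Q₀ P + max (R - condEnt Q₀) 0 := neg_log_gallagerZ_add_mul_le hPpos hr0 hr1 hQ₀ R
        _ = _ := hsaddle
    · obtain ⟨_, ⟨l, hl, rfl⟩, hlt, -⟩ := hR.exists_between_sub_self hε
      have hb' := hb ⟨ρ, l, hρ0, hρ1, hl, rfl⟩
      nlinarith
  rw [hmin.csInf_eq, hsup.csSup_eq ⟨_, ρ, 1, hρ0, hρ1, one_pos, rfl⟩]

end Gallager

/-- Gallager-style form of the fixed-rate FR–FA trade-off function,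
with the optimal rate `R_w*(E0)` substituted. -/
theorem stmt_10 {𝒳 𝒴 : Type*} [Fintype 𝒳] [Nonempty 𝒳] [Fintype 𝒴] [Nonempty 𝒴]
    (P : 𝒳 × 𝒴 → ℝ) (hP : IsProb P) (hPpos : ∀ p, 0 < P p)
    (E0 : ℝ) (hE0 : 0 < E0) :
    sInf {v | ∃ Q : 𝒳 × 𝒴 → ℝ, IsProb Q ∧
        v = KL Q P +
          max ((sInf {u | ∃ QX : 𝒳 → ℝ, IsProb QX ∧ KL QX (margX P) ≤ E0 ∧
                  u = (∑ x, QX x * Real.log (1 / margX P x)) - E0})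
                - condEnt Q) 0}
      = sSup {v | ∃ r l : ℝ, 0 ≤ r ∧ r ≤ 1 ∧ 0 < l ∧
          v = -Real.log (∑ y, (∑ x, P (x, y) ^ (1 / (1 + r))) ^ (1 + r))
              - r * l * Real.log (∑ x, margX P x ^ (1 + 1 / l))
              - r * (1 + l) * E0} := by
  have hsplit : ∀ r l : ℝ, -log (∑ y, (∑ x, P (x, y) ^ (1 / (1 + r))) ^ (1 + r))
      - r * l * log (∑ x, margX P x ^ (1 + 1 / l)) - r * (1 + l) * E0 =
        -log (gallagerZ P r) + r * rateDual (margX P) E0 l := fun r l => by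
    simp only [gallagerZ, colSum, rateDual]
    ring
  simp only [hsplit]
  exact sInf_KL_add_max_eq_sSup hP hPpos
    (isLUB_rateDual (isProb_margX hP) (margX_pos hPpos) hE0)
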